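/- arXiv:0905.1300 — 2 statements merged into one kernel-verified Lean document; each statement's English description precedes it below -/
import Mathlib

section
/- Let P be a Hermitian operator on a finite-dimensional complex inner product space satisfying 0 ≤ P ≤ 1 (i.e., P is positive semidefinite and 1 - P is positive semidefinite). Then for every real number η > 0, exp(-η P) ≤ 1 - η·exp(-η)·P in the Loewner order. -/
open Matrix
open scoped ComplexOrder

/-!
The chord of the convex function `x ↦ exp (-η x)` over `[0, 1]` gives
`exp (-η x) ≤ 1 - (1 - exp (-η)) x`, and `1 - exp (-η) ≥ η exp (-η)` because `exp η ≥ 1 + η`.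
Since `0 ≤ P ≤ 1` puts the spectrum of `P` in `[0, 1]`, the continuous functional calculus
turns this scalar inequality into the operator inequality.
-/

theorem one_add_mul_exp_neg_le_one (η : ℝ) : (1 + η) * Real.exp (-η) ≤ 1 :=
  calc (1 + η) * Real.exp (-η) ≤ Real.exp η * Real.exp (-η) := by
        gcongr
        linarith [Real.add_one_le_exp η]
    _ = 1 := by rw [← Real.exp_add, add_neg_cancel, Real.exp_zero]

theorem exp_neg_mul_le_one_sub_mul (η : ℝ) {x : ℝ} (hx₀ : 0 ≤ x) (hx₁ : x ≤ 1) :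
    Real.exp (-η * x) ≤ 1 - η * Real.exp (-η) * x := by
  have hchord : Real.exp (-η * x) ≤ (1 - x) + x * Real.exp (-η) := by
    simpa [smul_eq_mul, mul_comm] using
      convexOn_exp.2 (Set.mem_univ 0) (Set.mem_univ (-η)) (sub_nonneg.2 hx₁) hx₀ (by ring)
  nlinarith [mul_nonneg hx₀ (sub_nonneg.2 (one_add_mul_exp_neg_le_one η))]

section CStarAlgebra

variable {A : Type*} [CStarAlgebra A]

theorem cfc_one_sub_mul_sub_exp_neg_mul {a : A} (ha : IsSelfAdjoint a) (η : ℝ) :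
    cfc (fun x => 1 - η * Real.exp (-η) * x - Real.exp (-η * x)) a
      = 1 - (η * Real.exp (-η)) • a - NormedSpace.exp ((-η) • a) := by
  rw [cfc_sub .., cfc_sub .., cfc_const_one .., cfc_const_mul_id ..,
    ← CFC.real_exp_eq_normedSpace_exp, cfc_comp_const_mul (-η) Real.exp a]

theorem exp_neg_smul_le_one_sub_smul [PartialOrder A] [StarOrderedRing A] {a : A}
    (ha₀ : 0 ≤ a) (ha₁ : a ≤ 1) (η : ℝ) :
    NormedSpace.exp ((-η) • a) ≤ 1 - (η * Real.exp (-η)) • a := by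
  rw [← sub_nonneg, ← cfc_one_sub_mul_sub_exp_neg_mul ha₀.isSelfAdjoint]
  refine cfc_nonneg fun x hx => sub_nonneg.2 ?_
  exact exp_neg_mul_le_one_sub_mul η (spectrum_nonneg_of_nonneg ha₀ hx)
    ((CFC.le_one_iff a).1 ha₁ x hx)

end CStarAlgebra

theorem matrix_exp_inequality_general {n : Type*} [Fintype n] [DecidableEq n]
    (P : Matrix n n ℂ) (hP : P.PosSemidef) (hP1 : ((1 : Matrix n n ℂ) - P).PosSemidef)
    (η : ℝ) :
    ((1 : Matrix n n ℂ) - (η * Real.exp (-η)) • P - NormedSpace.exp ((-η) • P)).PosSemidef := by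
  -- `NormedSpace.exp` depends only on the topology, so the choice of C⋆-norm is harmless.
  open scoped Matrix.Norms.L2Operator MatrixOrder in
  rw [← nonneg_iff_posSemidef, sub_nonneg]
  exact exp_neg_smul_le_one_sub_smul hP.nonneg hP1 η

/-- **Lemma (matrix exponential inequality).**
Let `P` be a Hermitian operator with `0 ≤ P ≤ 1` (both `P` and `1 - P` positive
semidefinite). Then for every real `η > 0`, `exp(-η P) ≤ 1 - η·exp(-η)·P` in the
Loewner order, i.e. `1 - η·exp(-η)·P - exp(-ηP)` is positive semidefinite. -/
theorem matrix_exp_inequality {n : Type*} [Fintype n] [DecidableEq n]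
    (P : Matrix n n ℂ) (hP : P.PosSemidef) (hP1 : ((1 : Matrix n n ℂ) - P).PosSemidef)
    (η : ℝ) (hη : 0 < η) :
    ((1 : Matrix n n ℂ) - (η * Real.exp (-η)) • P - NormedSpace.exp ((-η) • P)).PosSemidef :=
  matrix_exp_inequality_general P hP hP1 η
end

section
/- Let R₀, R₁ be positive semidefinite operators on a finite-dimensional complex Hilbert space W. Then ‖R₀ - R₁‖₁ ≤ √(2·Tr(R₀)² + 2·Tr(R₁)² - 4·F(R₀,R₁)²), where F(R₀,R₁) = ‖√R₀ · √R₁‖₁ is the fidelity. -/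
open Matrix
open scoped ComplexOrder

open scoped Classical in
/-- The positive semidefinite square root (junk value `0` off the PSD matrices). -/
noncomputable def psdSqrt {n : Type*} [Fintype n] [DecidableEq n]
    (A : Matrix n n ℂ) : Matrix n n ℂ :=
  if h : A.PosSemidef then
    h.1.eigenvectorUnitary.1 * diagonal ((↑) ∘ (√·) ∘ h.1.eigenvalues) *
      (star h.1.eigenvectorUnitary : Matrix n n ℂ)
  else 0

/-- The trace norm `‖A‖₁ = Tr √(AᴴA)`. -/
noncomputable def traceNorm {m n : Type*} [Fintype m] [Fintype n] [DecidableEq n]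
    (A : Matrix m n ℂ) : ℝ :=
  ((psdSqrt (Aᴴ * A)).trace).re

/-- The fidelity `F(P,Q) = ‖√P √Q‖₁` of positive semidefinite operators. -/
noncomputable def fidelity {n : Type*} [Fintype n] [DecidableEq n]
    (P Q : Matrix n n ℂ) : ℝ :=
  traceNorm (psdSqrt P * psdSqrt Q)


/-!
Put `A = √R₀`, `B = √R₁`. A polar decomposition `A B = U |A B|` gives `Re Tr (A B U*) = F`, and
a Hermitian unitary `S` with `S (R₀ - R₁) = |R₀ - R₁|` gives `‖R₀ - R₁‖₁ = Re Tr (S (R₀ - R₁))`.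
For `X = A + B U*` and `Z = A - B U*` this equals `Re Tr (X* S Z)`, so by Cauchy–Schwarz for the
Hilbert–Schmidt inner product it is at most `‖X‖₂ ‖Z‖₂ = √((Tr R₀ + Tr R₁)² - 4 F²)`.
-/

open scoped MatrixOrder

section General

variable {𝕜 : Type*} [RCLike 𝕜]

theorem LinearMap.exists_linearIsometry_comp_eq {F E : Type*} [AddCommGroup F] [Module 𝕜 F]
    [NormedAddCommGroup E] [InnerProductSpace 𝕜 E] [FiniteDimensional 𝕜 E]
    (f g : F →ₗ[𝕜] E) (h : ∀ x, ‖f x‖ = ‖g x‖) :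
    ∃ u : E →ₗᵢ[𝕜] E, ∀ x, u (f x) = g x := by
  have hker : ker f ≤ ker g := fun x hx => by
    rw [mem_ker, ← norm_eq_zero, ← h, mem_ker.mp hx, norm_zero]
  let L : range f →ₗ[𝕜] E := (ker f).liftQ g hker ∘ₗ f.quotKerEquivRange.symm.toLinearMap
  have hL (x : F) : L (f.rangeRestrict x) = g x := by
    change (ker f).liftQ g hker (f.quotKerEquivRange.symm ⟨f x, mem_range_self f x⟩) = g x
    rw [quotKerEquivRange_symm_apply_image]
    rfl
  let Li : range f →ₗᵢ[𝕜] E :=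
    { L with
      norm_map' := by
        rintro ⟨_, x, rfl⟩
        exact (congrArg norm (hL x)).trans (h x).symm }
  exact ⟨Li.extend, fun x => (Li.extend_apply (f.rangeRestrict x)).trans (hL x)⟩

namespace Matrix

variable {n : Type*} [Fintype n] [DecidableEq n]

theorem exists_mem_unitaryGroup_mul_eq {P T : Matrix n n 𝕜} (h : Pᴴ * P = Tᴴ * T) :
    ∃ U ∈ unitaryGroup n 𝕜, U * P = T := by
  let e := toEuclideanCLM (n := n) (𝕜 := 𝕜)
  have hPT : (e P).adjoint ∘L e P = (e T).adjoint ∘L e T := by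
    have := congrArg e h
    rwa [← star_eq_conjTranspose, ← star_eq_conjTranspose, map_mul, map_mul, map_star, map_star,
      ContinuousLinearMap.star_eq_adjoint, ContinuousLinearMap.star_eq_adjoint] at this
  obtain ⟨u, hu⟩ := (e P).toLinearMap.exists_linearIsometry_comp_eq (e T).toLinearMap fun x => by
    rw [ContinuousLinearMap.coe_coe, ContinuousLinearMap.coe_coe,
      (e P).apply_norm_eq_sqrt_inner_adjoint_left, (e T).apply_norm_eq_sqrt_inner_adjoint_left,
      hPT]
  refine ⟨e.symm u.toContinuousLinearMap, ?_, ?_⟩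
  · rw [mem_unitaryGroup_iff', ← (EquivLike.injective e).eq_iff, map_mul, map_star, map_one,
      StarAlgEquiv.apply_symm_apply, ContinuousLinearMap.star_eq_adjoint]
    exact u.adjoint_comp_self
  · rw [← (EquivLike.injective e).eq_iff, map_mul, StarAlgEquiv.apply_symm_apply]
    exact ContinuousLinearMap.ext hu

theorem exists_mem_unitaryGroup_mul_abs_eq (T : Matrix n n 𝕜) :
    ∃ U ∈ unitaryGroup n 𝕜, U * CFC.abs T = T :=
  exists_mem_unitaryGroup_mul_eq <| by
    rw [← star_eq_conjTranspose, (CFC.abs_nonneg T).isSelfAdjoint.star_eq, CFC.abs_mul_abs,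
      star_eq_conjTranspose]

theorem IsHermitian.exists_mem_unitaryGroup_mul_eq_abs {Δ : Matrix n n 𝕜}
    (hΔ : Δ.IsHermitian) :
    ∃ S ∈ unitaryGroup n 𝕜, S.IsHermitian ∧ S * Δ = CFC.abs Δ := by
  -- the spectrum is finite, so the discontinuous sign function is admissible
  have hcont (f : ℝ → ℝ) : ContinuousOn f (spectrum ℝ Δ) :=
    Δ.finite_real_spectrum.continuousOn f
  set s : ℝ → ℝ := fun x => if 0 ≤ x then 1 else -1
  have hS : IsSelfAdjoint (cfc s Δ) := cfc_predicate s Δ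
  refine ⟨cfc s Δ, ?_, hS, ?_⟩
  · rw [mem_unitaryGroup_iff', hS.star_eq, ← cfc_mul s s Δ (hcont s) (hcont s), ← cfc_one ℝ Δ]
    refine cfc_congr fun x _ => ?_
    by_cases hx : 0 ≤ x <;> simp [s, hx]
  · rw [CFC.abs_eq_cfc_norm Δ]
    nth_rw 2 [← cfc_id' ℝ Δ]
    rw [← cfc_mul s (fun x => x) Δ (hcont s) (hcont _)]
    refine cfc_congr fun x _ => ?_
    by_cases hx : 0 ≤ x
    · simp [s, hx, abs_of_nonneg hx]
    · simp [s, hx, abs_of_neg (not_le.mp hx)]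

theorem re_trace_conjTranspose_mul_le (X Y : Matrix n n 𝕜) :
    RCLike.re (Xᴴ * Y).trace ≤
      √(RCLike.re (Xᴴ * X).trace) * √(RCLike.re (Yᴴ * Y).trace) := by
  let := toMatrixSeminormedAddCommGroup (1 : Matrix n n 𝕜) PosSemidef.one
  let := toMatrixInnerProductSpace (1 : Matrix n n 𝕜) PosSemidef.one
  have hinner (x y : Matrix n n 𝕜) : inner 𝕜 x y = (xᴴ * y).trace := by
    rw [trace_mul_comm]
    conv_rhs => rw [← Matrix.mul_one y]
    rfl
  have hnorm (x : Matrix n n 𝕜) : ‖x‖ = √(RCLike.re (xᴴ * x).trace) := by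
    rw [norm_eq_sqrt_re_inner (𝕜 := 𝕜), hinner]
  rw [← hinner, ← hnorm, ← hnorm]
  exact (RCLike.re_le_norm _).trans (norm_inner_le_norm X Y)

theorem re_trace_conjTranspose_add_mul_sub {A S : Matrix n n 𝕜} (hA : A.IsHermitian)
    (hS : S.IsHermitian) (Y : Matrix n n 𝕜) :
    RCLike.re ((A + Y)ᴴ * (S * (A - Y))).trace = RCLike.re (S * (A * A - Y * Yᴴ)).trace := by
  have hexp : (A + Y)ᴴ * (S * (A - Y)) =
      A * (S * A) - Yᴴ * (S * Y) + (Yᴴ * (S * A) - A * (S * Y)) := by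
    rw [conjTranspose_add, hA.eq]; noncomm_ring
  have hcross : (Yᴴ * (S * A)).trace = star (A * (S * Y)).trace := by
    rw [← trace_conjTranspose, conjTranspose_mul, conjTranspose_mul, hA.eq, hS.eq,
      Matrix.mul_assoc]
  rw [hexp, trace_add, trace_sub, trace_sub, hcross, map_add, map_sub, map_sub, RCLike.star_def,
    RCLike.conj_re, sub_self, add_zero, Matrix.mul_sub, trace_sub, map_sub, trace_mul_comm A,
    trace_mul_comm Yᴴ, Matrix.mul_assoc, Matrix.mul_assoc]

theorem re_trace_conjTranspose_add_mul_self {A : Matrix n n 𝕜} (hA : A.IsHermitian)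
    (Y : Matrix n n 𝕜) :
    RCLike.re ((A + Y)ᴴ * (A + Y)).trace =
      RCLike.re (A * A).trace + RCLike.re (Yᴴ * Y).trace + 2 * RCLike.re (A * Y).trace := by
  have hexp : (A + Y)ᴴ * (A + Y) = A * A + Yᴴ * Y + (A * Y + Yᴴ * A) := by
    rw [conjTranspose_add, hA.eq]; noncomm_ring
  have hcross : (Yᴴ * A).trace = star (A * Y).trace := by
    rw [← trace_conjTranspose, conjTranspose_mul, hA.eq]
  rw [hexp, trace_add, trace_add, trace_add, hcross, map_add, map_add, map_add, RCLike.star_def,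
    RCLike.conj_re]
  ring

theorem re_trace_mul_sub_mul_conjTranspose_le {A S : Matrix n n 𝕜} (hA : A.IsHermitian)
    (hS : S ∈ unitaryGroup n 𝕜) (hS' : S.IsHermitian) (Y : Matrix n n 𝕜) :
    RCLike.re (S * (A * A - Y * Yᴴ)).trace ≤
      √((RCLike.re (A * A).trace + RCLike.re (Yᴴ * Y).trace) ^ 2 -
        4 * RCLike.re (A * Y).trace ^ 2) := by
  have hSZ : (S * (A - Y))ᴴ * (S * (A - Y)) = (A + -Y)ᴴ * (A + -Y) := by
    rw [conjTranspose_mul, Matrix.mul_assoc, ← Matrix.mul_assoc Sᴴ,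
      show Sᴴ * S = 1 from mem_unitaryGroup_iff'.mp hS, Matrix.one_mul, sub_eq_add_neg]
  have hnonneg : 0 ≤ RCLike.re ((A + Y)ᴴ * (A + Y)).trace :=
    RCLike.nonneg_iff.mp (posSemidef_conjTranspose_mul_self _).trace_nonneg |>.1
  calc RCLike.re (S * (A * A - Y * Yᴴ)).trace
      = RCLike.re ((A + Y)ᴴ * (S * (A - Y))).trace :=
        (re_trace_conjTranspose_add_mul_sub hA hS' Y).symm
    _ ≤ √(RCLike.re ((A + Y)ᴴ * (A + Y)).trace) *
          √(RCLike.re ((S * (A - Y))ᴴ * (S * (A - Y))).trace) :=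
        re_trace_conjTranspose_mul_le _ _
    _ = √(RCLike.re ((A + Y)ᴴ * (A + Y)).trace * RCLike.re ((A + -Y)ᴴ * (A + -Y)).trace) := by
        rw [hSZ, Real.sqrt_mul hnonneg]
    _ = _ := by
        rw [re_trace_conjTranspose_add_mul_self hA, re_trace_conjTranspose_add_mul_self hA,
          conjTranspose_neg, neg_mul_neg, Matrix.mul_neg, trace_neg, map_neg]
        congr 1
        ring

end Matrix

end General

section TraceNorm

variable {n : Type*} [Fintype n] [DecidableEq n]

theorem psdSqrt_eq_sqrt {A : Matrix n n ℂ} (hA : A.PosSemidef) : psdSqrt A = CFC.sqrt A := by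
  rw [CFC.sqrt_eq_real_sqrt A (nonneg_iff_posSemidef.mpr hA), cfcₙ_eq_cfc, hA.1.cfc_eq, psdSqrt,
    dif_pos hA]
  rfl

theorem traceNorm_eq_re_trace_abs (T : Matrix n n ℂ) : traceNorm T = (CFC.abs T).trace.re := by
  rw [traceNorm, psdSqrt_eq_sqrt (posSemidef_conjTranspose_mul_self T)]
  rfl

end TraceNorm

/-- For positive semidefinite `R₀, R₁` on a finite-dimensional complex Hilbert space,
`‖R₀ - R₁‖₁ ≤ √(2·Tr(R₀)² + 2·Tr(R₁)² - 4·F(R₀,R₁)²)`. -/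
theorem traceNorm_sub_le_of_fidelity
    {W : Type*} [Fintype W] [DecidableEq W] (R₀ R₁ : Matrix W W ℂ)
    (h₀ : R₀.PosSemidef) (h₁ : R₁.PosSemidef) :
    traceNorm (R₀ - R₁) ≤
      Real.sqrt (2 * R₀.trace.re ^ 2 + 2 * R₁.trace.re ^ 2 - 4 * fidelity R₀ R₁ ^ 2) := by
  rw [fidelity, psdSqrt_eq_sqrt h₀, psdSqrt_eq_sqrt h₁, traceNorm_eq_re_trace_abs,
    traceNorm_eq_re_trace_abs]
  set A := CFC.sqrt R₀
  set B := CFC.sqrt R₁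
  have hA : A.IsHermitian := (CFC.sqrt_nonneg R₀).isSelfAdjoint
  have hB : B.IsHermitian := (CFC.sqrt_nonneg R₁).isSelfAdjoint
  have hAA : A * A = R₀ := CFC.sqrt_mul_sqrt_self R₀ (nonneg_iff_posSemidef.mpr h₀)
  have hBB : B * B = R₁ := CFC.sqrt_mul_sqrt_self R₁ (nonneg_iff_posSemidef.mpr h₁)
  obtain ⟨U, hU, hUAB⟩ := exists_mem_unitaryGroup_mul_abs_eq (A * B)
  obtain ⟨S, hS, hS', hSΔ⟩ :=
    (h₀.isHermitian.sub h₁.isHermitian).exists_mem_unitaryGroup_mul_eq_abs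
  have hUU : star U * U = 1 := mem_unitaryGroup_iff'.mp hU
  have hYY : B * star U * (B * star U)ᴴ = R₁ := by
    rw [conjTranspose_mul, ← star_eq_conjTranspose, star_star, hB.eq, Matrix.mul_assoc,
      ← Matrix.mul_assoc (star U), hUU, Matrix.one_mul, hBB]
  have hAY : (A * (B * star U)).trace = (CFC.abs (A * B)).trace := calc
    _ = (star U * (U * CFC.abs (A * B))).trace := by
      rw [hUAB, ← Matrix.mul_assoc, trace_mul_comm]
    _ = _ := by rw [← Matrix.mul_assoc, hUU, Matrix.one_mul]
  have hbound := re_trace_mul_sub_mul_conjTranspose_le hA hS hS' (B * star U)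
  rw [trace_mul_comm (B * star U)ᴴ, hAA, hYY, hAY, hSΔ] at hbound
  simp only [RCLike.re_to_complex] at hbound
  refine hbound.trans (Real.sqrt_le_sqrt ?_)
  nlinarith [sq_nonneg (R₀.trace.re - R₁.trace.re)]
end
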